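/- Let π: ℤ[k^×] → W = ℤ[k^×]/R be the quotient map. If q, q' ∈ ℤ[k^×] satisfy π(q) = π(q'), then a_n(q) = a_n(q') for every n ≥ 0. In other words, the functions a_n: ℤ[k^×] → W factor through the quotient map ℤ[k^×] → W. -/

import Mathlib

noncomputable section

/-- The ideal `R` of relations in the group ring `ℤ[k^×]`: generated by the elements
`⟨a⟩ − ⟨ab²⟩` for `a, b ∈ k^×`, and `⟨a⟩ + ⟨b⟩ − ⟨a+b⟩ − ⟨(a+b)ab⟩` for `a, b ∈ k^×`
with `a + b ≠ 0` (the condition `a + b ≠ 0` being encoded by the existence of a unit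
`c` with value `a + b`). -/
def GWIdeal (k : Type*) [Field k] : Ideal (MonoidAlgebra ℤ kˣ) :=
  Ideal.span
    ({x | ∃ a b : kˣ, x = MonoidAlgebra.of ℤ kˣ a - MonoidAlgebra.of ℤ kˣ (a * b ^ 2)} ∪
     {x | ∃ a b c : kˣ, (c : k) = (a : k) + (b : k) ∧
        x = MonoidAlgebra.of ℤ kˣ a + MonoidAlgebra.of ℤ kˣ b
            - MonoidAlgebra.of ℤ kˣ c - MonoidAlgebra.of ℤ kˣ (c * a * b)})

/-- The Grothendieck–Witt ring of `k`, presented (Lam) as `ℤ[k^×]/R`. -/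
abbrev GW (k : Type*) [Field k] := MonoidAlgebra ℤ kˣ ⧸ GWIdeal k

/-- `⟨a⟩`: the class in `W = ℤ[k^×]/R` of the basis element of `a ∈ k^×`. -/
def gw {k : Type*} [Field k] (a : kˣ) : GW k :=
  Ideal.Quotient.mk (GWIdeal k) (MonoidAlgebra.of ℤ kˣ a)

/-- `t_a := ⟨2⟩ + ⟨a⟩ − ⟨1⟩ − ⟨2a⟩ ∈ W` (for `k` of characteristic `≠ 2`, so that
`2` is a unit of `k`). -/
def tGW {k : Type*} [Field k] (h2 : (2 : k) ≠ 0) (a : kˣ) : GW k :=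
  gw (Units.mk0 (2 : k) h2) + gw a - gw 1 - gw (Units.mk0 (2 : k) h2 * a)

end


section GWAuxLemmas
variable {k : Type*} [Field k]

lemma gw_mul (a b : kˣ) : gw (k := k) a * gw b = gw (a * b) := by
  simp only [gw, ← map_mul]

lemma gw_one : gw (k := k) 1 = 1 := by
  simp [gw, ← MonoidAlgebra.one_def]

lemma gw_sq (a b : kˣ) : gw (k := k) (a * b ^ 2) = gw a := by
  rw [gw, gw, eq_comm, Ideal.Quotient.eq]
  exact Ideal.subset_span (Or.inl ⟨a, b, rfl⟩)

lemma gw_rel {a b c : kˣ} (h : (c : k) = (a : k) + (b : k)) :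
    gw (k := k) a + gw b = gw c + gw (c * a * b) := by
  have hm : (MonoidAlgebra.of ℤ kˣ a + MonoidAlgebra.of ℤ kˣ b
      - MonoidAlgebra.of ℤ kˣ c - MonoidAlgebra.of ℤ kˣ (c * a * b)) ∈ GWIdeal k :=
    Ideal.subset_span (Or.inr ⟨a, b, c, h, rfl⟩)
  have h0 := (Ideal.Quotient.eq_zero_iff_mem).mpr hm
  simp only [map_add, map_sub] at h0
  unfold gw
  linear_combination h0

end GWAuxLemmas

section Abstract
open PowerSeries

variable {k : Type*} [Field k] {W : Type*} [CommRing W]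

set_option maxHeartbeats 1000000 in
lemma gwAux (two : kˣ) (gwf : kˣ → W)
    (hone : gwf 1 = 1)
    (hmul : ∀ a b : kˣ, gwf a * gwf b = gwf (a * b))
    (hsq : ∀ a b : kˣ, gwf (a * b ^ 2) = gwf a)
    (hrel : ∀ a b c : kˣ, (c : k) = (a : k) + (b : k) →
      gwf a + gwf b = gwf c + gwf (c * a * b))
    (t : kˣ → W)
    (ht : ∀ a : kˣ, t a = gwf two + gwf a - gwf 1 - gwf (two * a))
    (A : ℕ → MonoidAlgebra ℤ kˣ → W)
    (hA0 : ∀ q, A 0 q = 1)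
    (hAz : ∀ n : ℕ, 1 ≤ n → A n 0 = 0)
    (hAadd : ∀ (n : ℕ) (q q' : MonoidAlgebra ℤ kˣ),
      A n (q + q') = ∑ i ∈ Finset.range (n + 1), A i q * A (n - i) q')
    (hAsingle : ∀ (α : kˣ) (n : ℕ), 1 ≤ n →
      A n (MonoidAlgebra.of ℤ kˣ α) = gwf (α ^ n) + (n / 2) • t α) :
    ∀ q q' : MonoidAlgebra ℤ kˣ, q - q' ∈ GWIdeal k → ∀ n : ℕ, A n q = A n q' := by
  classical
  obtain ⟨F, hF⟩ : ∃ F : MonoidAlgebra ℤ kˣ → PowerSeries W,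
      F = fun q => PowerSeries.mk fun n => A n q := ⟨_, rfl⟩
  have hFcoeff : ∀ q n, PowerSeries.coeff (R := W) n (F q) = A n q := by
    intro q n; simp [hF]
  have hFmul : ∀ q q', F (q + q') = F q * F q' := by
    intro q q'
    ext n
    rw [hFcoeff, PowerSeries.coeff_mul, Finset.Nat.sum_antidiagonal_eq_sum_range_succ_mk,
      hAadd]
    exact Finset.sum_congr rfl fun i _ => by rw [hFcoeff, hFcoeff]
  have hF0 : F 0 = 1 := by
    ext n
    rw [hFcoeff, PowerSeries.coeff_one]
    cases n with
    | zero => simp [hA0]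
    | succ m => simp [hAz (m + 1) (by omega)]
  have hFinv : ∀ q, F q * F (-q) = 1 := fun q => by
    rw [← hFmul, add_neg_cancel, hF0]
  obtain ⟨g2, hg2⟩ : ∃ x : W, x = gwf two := ⟨_, rfl⟩
  obtain ⟨P, hP⟩ : ∃ P : PowerSeries W,
      P = 1 - PowerSeries.X + PowerSeries.C (R := W) (g2 - 1) * PowerSeries.X ^ 2 := ⟨_, rfl⟩
  obtain ⟨Q, hQ⟩ : ∃ Q : PowerSeries W,
      Q = PowerSeries.X - PowerSeries.C (R := W) g2 * PowerSeries.X ^ 2 := ⟨_, rfl⟩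
  obtain ⟨D, hD⟩ : ∃ D : PowerSeries W,
      D = 1 - PowerSeries.X ^ 1 - PowerSeries.X ^ 2 + PowerSeries.X ^ 3 := ⟨_, rfl⟩
  have hDunit : IsUnit D := by
    rw [PowerSeries.isUnit_iff_constantCoeff, hD]
    simp
  have hgw2 : ∀ α : kˣ, gwf (α ^ 2) = 1 := by
    intro α
    rw [show α ^ 2 = 1 * α ^ 2 by rw [one_mul], hsq, hone]
  have hNcoeff : ∀ (w : W) (m : ℕ),
      PowerSeries.coeff (R := W) m (P + PowerSeries.C (R := W) w * Q) =
        if m = 0 then 1 else if m = 1 then w - 1 else if m = 2 then g2 - 1 - g2 * w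
          else 0 := by
    intro w m
    rw [hP, hQ]
    simp only [mul_sub, sub_mul, add_mul, mul_add, one_mul, mul_one, map_add, map_sub,
      PowerSeries.coeff_one, PowerSeries.coeff_C_mul, PowerSeries.coeff_X_pow,
      PowerSeries.coeff_X]
    match m with
    | 0 => norm_num
    | 1 => norm_num; try ring
    | 2 => norm_num; try ring
    | (r + 3) =>
      have h0 : ¬ (r + 3 = 0) := by omega
      have h1 : ¬ (r + 3 = 1) := by omega
      have hh2 : ¬ (r + 3 = 2) := by omega
      simp [h0, h1, hh2]
  have hclosed : ∀ α : kˣ,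
      F (MonoidAlgebra.of ℤ kˣ α) * D = P + PowerSeries.C (R := W) (gwf α) * Q := by
    intro α
    ext n
    rw [hNcoeff]
    have c1 : ∀ m : ℕ, PowerSeries.coeff (R := W) m (F (MonoidAlgebra.of ℤ kˣ α) * D) =
        A m (MonoidAlgebra.of ℤ kˣ α)
        - (if 1 ≤ m then A (m - 1) (MonoidAlgebra.of ℤ kˣ α) else 0)
        - (if 2 ≤ m then A (m - 2) (MonoidAlgebra.of ℤ kˣ α) else 0)
        + (if 3 ≤ m then A (m - 3) (MonoidAlgebra.of ℤ kˣ α) else 0) := by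
      intro m
      rw [hD, mul_add, mul_sub, mul_sub, mul_one, map_add, map_sub, map_sub,
        PowerSeries.coeff_mul_X_pow', PowerSeries.coeff_mul_X_pow',
        PowerSeries.coeff_mul_X_pow', hFcoeff]
      split_ifs <;> simp only [hFcoeff]
    rw [c1]
    match n with
    | 0 => simp [hA0]
    | 1 =>
      rw [hAsingle α 1 le_rfl, hA0]
      norm_num
    | 2 =>
      rw [hAsingle α 2 (by omega), hAsingle α 1 le_rfl, hA0]
      have e2 : ((2 : ℕ) / 2) = 1 := by norm_num
      rw [e2, one_smul, hgw2, pow_one, ht, hone, ← hmul, ← hg2]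
      norm_num
      ring
    | 3 =>
      rw [hAsingle α 3 (by omega), hAsingle α 2 (by omega), hAsingle α 1 le_rfl, hA0]
      have e3 : gwf (α ^ 3) = gwf α := by
        rw [pow_succ' α 2, show α * α ^ 2 = α * α ^ 2 from rfl, hsq]
      rw [e3, hgw2, pow_one]
      norm_num
      try abel
    | (m + 4) =>
      have i1 : (1 : ℕ) ≤ m + 4 := by omega
      have i2 : (2 : ℕ) ≤ m + 4 := by omega
      have i3 : (3 : ℕ) ≤ m + 4 := by omega
      rw [if_pos i1, if_pos i2, if_pos i3,
        show m + 4 - 1 = m + 3 from rfl, show m + 4 - 2 = m + 2 from rfl,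
        show m + 4 - 3 = m + 1 from rfl,
        hAsingle α (m + 4) (by omega), hAsingle α (m + 3) (by omega),
        hAsingle α (m + 2) (by omega), hAsingle α (m + 1) (by omega)]
      have j0 : ¬ (m + 4 = 0) := by omega
      have j1 : ¬ (m + 4 = 1) := by omega
      have j2 : ¬ (m + 4 = 2) := by omega
      rw [if_neg j0, if_neg j1, if_neg j2]
      have p1 : α ^ (m + 4) = α ^ (m + 2) * α ^ 2 := by rw [← pow_add]
      have p2 : α ^ (m + 3) = α ^ (m + 1) * α ^ 2 := by rw [← pow_add]
      have d1 : (m + 4) / 2 = (m + 2) / 2 + 1 := by omega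
      have d2 : (m + 3) / 2 = (m + 1) / 2 + 1 := by omega
      rw [p1, p2, hsq, hsq, d1, d2, succ_nsmul, succ_nsmul]
      abel
  have hmain : ∀ a b c : kˣ, (c : k) = (a : k) + (b : k) →
      F (MonoidAlgebra.of ℤ kˣ a) * F (MonoidAlgebra.of ℤ kˣ b) =
      F (MonoidAlgebra.of ℤ kˣ c) * F (MonoidAlgebra.of ℤ kˣ (c * a * b)) := by
    intro a b c hc
    have hD2 : IsUnit (D * D) := hDunit.mul hDunit
    apply hD2.mul_right_cancel
    calc F (MonoidAlgebra.of ℤ kˣ a) * F (MonoidAlgebra.of ℤ kˣ b) * (D * D)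
        = (F (MonoidAlgebra.of ℤ kˣ a) * D) * (F (MonoidAlgebra.of ℤ kˣ b) * D) := by ring
      _ = (P + PowerSeries.C (R := W) (gwf a) * Q) * (P + PowerSeries.C (R := W) (gwf b) * Q) := by
          rw [hclosed, hclosed]
      _ = (P + PowerSeries.C (R := W) (gwf c) * Q) * (P + PowerSeries.C (R := W) (gwf (c * a * b)) * Q) := by
          have h1 : gwf a + gwf b = gwf c + gwf (c * a * b) := hrel a b c hc
          have hu : c * (c * a * b) = (a * b) * c ^ 2 := by
            apply Units.ext
            simp only [Units.val_mul, Units.val_pow_eq_pow_val]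
            ring
          have h2' : gwf a * gwf b = gwf c * gwf (c * a * b) := by
            rw [hmul, hmul, hu, hsq]
          have hC1 := congrArg (PowerSeries.C (R := W)) h1
          have hC2 := congrArg (PowerSeries.C (R := W)) h2'
          rw [map_add, map_add] at hC1
          rw [map_mul, map_mul] at hC2
          linear_combination (P * Q) * hC1 + Q ^ 2 * hC2
      _ = (F (MonoidAlgebra.of ℤ kˣ c) * D) * (F (MonoidAlgebra.of ℤ kˣ (c * a * b)) * D) := by
          rw [hclosed, hclosed]
      _ = F (MonoidAlgebra.of ℤ kˣ c) * F (MonoidAlgebra.of ℤ kˣ (c * a * b)) * (D * D) := by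
          ring
  set Gen : Set (MonoidAlgebra ℤ kˣ) :=
      ({x | ∃ a b : kˣ, x = MonoidAlgebra.of ℤ kˣ a - MonoidAlgebra.of ℤ kˣ (a * b ^ 2)} ∪
       {x | ∃ a b c : kˣ, (c : k) = (a : k) + (b : k) ∧
          x = MonoidAlgebra.of ℤ kˣ a + MonoidAlgebra.of ℤ kˣ b
              - MonoidAlgebra.of ℤ kˣ c - MonoidAlgebra.of ℤ kˣ (c * a * b)}) with hGen
  have hFgen : ∀ g ∈ Gen, F g = 1 := by
    intro g hg
    rw [hGen] at hg
    obtain (⟨a, b, rfl⟩ | ⟨a, b, c, hc, rfl⟩) := hg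
    · have heq : F (MonoidAlgebra.of ℤ kˣ a) = F (MonoidAlgebra.of ℤ kˣ (a * b ^ 2)) := by
        ext n
        rw [hFcoeff, hFcoeff]
        cases n with
        | zero => rw [hA0, hA0]
        | succ m =>
          rw [hAsingle a (m + 1) (by omega), hAsingle (a * b ^ 2) (m + 1) (by omega)]
          have e1 : (a * b ^ 2) ^ (m + 1) = a ^ (m + 1) * (b ^ (m + 1)) ^ 2 := by
            rw [mul_pow, ← pow_mul, ← pow_mul, Nat.mul_comm]
          have e2 : t (a * b ^ 2) = t a := by
            rw [ht, ht, hsq, show two * (a * b ^ 2) = (two * a) * b ^ 2 from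
              (mul_assoc _ _ _).symm, hsq]
          rw [e1, hsq, e2]
      rw [sub_eq_add_neg, hFmul, heq, hFinv]
    · rw [sub_eq_add_neg, sub_eq_add_neg, hFmul, hFmul, hFmul, hmain a b c hc]
      calc F (MonoidAlgebra.of ℤ kˣ c) * F (MonoidAlgebra.of ℤ kˣ (c * a * b)) *
            F (-MonoidAlgebra.of ℤ kˣ c) * F (-MonoidAlgebra.of ℤ kˣ (c * a * b))
          = (F (MonoidAlgebra.of ℤ kˣ c) * F (-MonoidAlgebra.of ℤ kˣ c)) *
            (F (MonoidAlgebra.of ℤ kˣ (c * a * b)) * F (-MonoidAlgebra.of ℤ kˣ (c * a * b))) := by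
            ring
        _ = 1 := by rw [hFinv, hFinv, one_mul]
  set T : AddSubgroup (MonoidAlgebra ℤ kˣ) := AddSubgroup.closure Gen with hT
  have hsc : ∀ x ∈ Gen, x ∈ T := fun x hx => AddSubgroup.subset_closure hx
  have hmulof : ∀ (m : kˣ), ∀ g ∈ Gen, MonoidAlgebra.of ℤ kˣ m * g ∈ T := by
    intro m g hg
    rw [hGen] at hg
    obtain (⟨a, b, rfl⟩ | ⟨a, b, c, hc, rfl⟩) := hg
    · refine hsc _ (hGen ▸ Or.inl ⟨m * a, b, ?_⟩)
      rw [mul_sub, ← map_mul, ← map_mul, mul_assoc]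
    · have hc' : ((m * c : kˣ) : k) = ((m * a : kˣ) : k) + ((m * b : kˣ) : k) := by
        simp only [Units.val_mul, hc]; ring
      have mem2 : (MonoidAlgebra.of ℤ kˣ (m * a) + MonoidAlgebra.of ℤ kˣ (m * b)
          - MonoidAlgebra.of ℤ kˣ (m * c)
          - MonoidAlgebra.of ℤ kˣ ((m * c) * (m * a) * (m * b))) ∈ T :=
        hsc _ (hGen ▸ Or.inr ⟨m * a, m * b, m * c, hc', rfl⟩)
      have mem1 : (MonoidAlgebra.of ℤ kˣ (m * (c * a * b))
          - MonoidAlgebra.of ℤ kˣ ((m * (c * a * b)) * m ^ 2)) ∈ T :=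
        hsc _ (hGen ▸ Or.inl ⟨m * (c * a * b), m, rfl⟩)
      have hu : (m * c) * (m * a) * (m * b) = (m * (c * a * b)) * m ^ 2 := by
        apply Units.ext
        simp only [Units.val_mul, Units.val_pow_eq_pow_val]
        ring
      have key : MonoidAlgebra.of ℤ kˣ m *
          (MonoidAlgebra.of ℤ kˣ a + MonoidAlgebra.of ℤ kˣ b
            - MonoidAlgebra.of ℤ kˣ c - MonoidAlgebra.of ℤ kˣ (c * a * b)) =
          (MonoidAlgebra.of ℤ kˣ (m * a) + MonoidAlgebra.of ℤ kˣ (m * b)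
            - MonoidAlgebra.of ℤ kˣ (m * c)
            - MonoidAlgebra.of ℤ kˣ ((m * c) * (m * a) * (m * b)))
          - (MonoidAlgebra.of ℤ kˣ (m * (c * a * b))
            - MonoidAlgebra.of ℤ kˣ ((m * (c * a * b)) * m ^ 2)) := by
        rw [mul_sub, mul_sub, mul_add, ← map_mul, ← map_mul, ← map_mul, ← map_mul, hu]
        abel
      rw [key]
      exact sub_mem mem2 mem1
  have hTmul : ∀ (x r : MonoidAlgebra ℤ kˣ), r ∈ T → x * r ∈ T := by
    intro x
    induction x using MonoidAlgebra.induction_on with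
    | of m =>
      intro r hr
      rw [hT] at hr
      refine AddSubgroup.closure_induction ?_ ?_ ?_ ?_ hr
      · intro y hy; exact hmulof m y hy
      · rw [mul_zero]; exact zero_mem T
      · intro y z _ _ hy hz; rw [mul_add]; exact add_mem hy hz
      · intro y _ hy; rw [mul_neg]; exact neg_mem hy
    | add f g hf hg =>
      intro r hr
      rw [add_mul]
      exact add_mem (hf r hr) (hg r hr)
    | smul z f hf =>
      intro r hr
      rw [smul_mul_assoc]
      exact AddSubgroup.zsmul_mem T (hf r hr) z
  have hsub : ∀ r, r ∈ GWIdeal k → r ∈ T := by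
    have hle : GWIdeal k ≤ ({
        carrier := T
        zero_mem' := zero_mem T
        add_mem' := fun ha hb => add_mem ha hb
        smul_mem' := fun c x hx => hTmul c x hx } : Ideal (MonoidAlgebra ℤ kˣ)) := by
      rw [GWIdeal]
      exact Ideal.span_le.mpr fun g hg => hsc g (hGen ▸ hg)
    exact fun r hr => hle hr
  have hFT : ∀ r ∈ T, F r = 1 := by
    intro r hr
    rw [hT] at hr
    refine AddSubgroup.closure_induction ?_ ?_ ?_ ?_ hr
    · intro y hy; exact hFgen y hy
    · exact hF0
    · intro y z _ _ hy hz; rw [hFmul, hy, hz, one_mul]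
    · intro y _ hy
      have := hFinv y
      rw [hy, one_mul] at this
      exact this
  intro q q' hqq n
  have hFq : F q = F q' := by
    have h1 : F (q' + (q - q')) = F q' * F (q - q') := hFmul _ _
    rw [add_sub_cancel] at h1
    rw [h1, hFT _ (hsub _ hqq), mul_one]
  have := congrArg (PowerSeries.coeff (R := W) n) hFq
  rwa [hFcoeff, hFcoeff] at this

end Abstract

/-- The coefficient functions `a_n : ℤ[k^×] → W` (characterised by `a_0 ≡ 1`,
`a_n(0) = 0` for `n ≥ 1`, additivity, and `a_n(⟨α⟩) = ⟨αⁿ⟩ + ⌊n/2⌋·t_α`) factor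
through the quotient map `π : ℤ[k^×] → W = ℤ[k^×]/R`: if `π q = π q'` then
`a_n(q) = a_n(q')` for every `n`. -/
theorem an_factors_through_quotient {k : Type*} [Field k] (h2 : (2 : k) ≠ 0)
    (A : ℕ → MonoidAlgebra ℤ kˣ → GW k)
    (hA0 : ∀ q, A 0 q = 1)
    (hAz : ∀ n : ℕ, 1 ≤ n → A n 0 = 0)
    (hAadd : ∀ (n : ℕ) (q q' : MonoidAlgebra ℤ kˣ),
      A n (q + q') = ∑ i ∈ Finset.range (n + 1), A i q * A (n - i) q')
    (hAsingle : ∀ (α : kˣ) (n : ℕ), 1 ≤ n →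
      A n (MonoidAlgebra.of ℤ kˣ α) = gw (α ^ n) + (n / 2) • tGW h2 α) :
    ∀ q q' : MonoidAlgebra ℤ kˣ,
      Ideal.Quotient.mk (GWIdeal k) q = Ideal.Quotient.mk (GWIdeal k) q' →
      ∀ n : ℕ, A n q = A n q' := by
  intro q q' hqq n
  refine gwAux (Units.mk0 (2 : k) h2) gw gw_one gw_mul gw_sq
    (fun a b c h => gw_rel h) (tGW h2) (fun a => rfl) A hA0 hAz hAadd hAsingle q q'
    (Ideal.Quotient.eq.mp hqq) n
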